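/- If a defect free atomic representation σ of F_θ⁺ has connected graph, then for any two basis rays ℂξ₁ and ℂξ₂ there exist a basis ray ℂη and words w₁, w₂ ∈ F_θ⁺ such that σ(w_i)·ℂη = ℂξ_i for i = 1, 2. (Any undirected path in the graph of σ can be replaced by a 'pull back then push forward' path of the form w₂ w₁*.) -/

import Mathlib

inductive TwoGraphGen (I J : Type) : Type
  | e : I → TwoGraphGen I J
  | f : J → TwoGraphGen I J

def twoGraphRel {I J : Type} (θ : Equiv.Perm (I × J)) :
    FreeMonoid (TwoGraphGen I J) → FreeMonoid (TwoGraphGen I J) → Prop :=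
  fun a b => ∃ i j,
    a = FreeMonoid.of (TwoGraphGen.e i) * FreeMonoid.of (TwoGraphGen.f j) ∧
    b = FreeMonoid.of (TwoGraphGen.f (θ (i, j)).2) * FreeMonoid.of (TwoGraphGen.e (θ (i, j)).1)

def FTheta {I J : Type} (θ : Equiv.Perm (I × J)) : Type :=
  (conGen (twoGraphRel θ)).Quotient

instance {I J : Type} (θ : Equiv.Perm (I × J)) : Monoid (FTheta θ) :=
  inferInstanceAs (Monoid (conGen (twoGraphRel θ)).Quotient)

def FTheta.E {I J : Type} (θ : Equiv.Perm (I × J)) (i : I) : FTheta θ :=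
  (conGen (twoGraphRel θ)).mk' (FreeMonoid.of (TwoGraphGen.e i))

def FTheta.F {I J : Type} (θ : Equiv.Perm (I × J)) (j : J) : FTheta θ :=
  (conGen (twoGraphRel θ)).mk' (FreeMonoid.of (TwoGraphGen.f j))

def FTheta.eWord {I J : Type} (θ : Equiv.Perm (I × J)) (u : List I) : FTheta θ :=
  (u.map (FTheta.E θ)).prod

def FTheta.fWord {I J : Type} (θ : Equiv.Perm (I × J)) (v : List J) : FTheta θ :=
  (v.map (FTheta.F θ)).prod

/-!
A common source of `s₁` and `s` (a ray `η` with words carrying it onto both) is extended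
along a path from `s` to `s₂`. A forward edge is absorbed into the second word. A backward
edge `c → b` by a generator `h`, against a word `w` carrying the source to `b`, is pulled
back through `w` one letter at a time. If the letter `g` that `w` applies last has the
colour of `h`, defect freeness at `b` makes their sources equal. Otherwise take the
predecessor `d` of `c` of the colour of `g` and rewrite `h g₀` as `g₁ h₁` by the
commutation relation of `F_θ⁺`; defect freeness at `b` shows that `h₁` carries `d` onto
the source of `g`, so the backward edge has moved one letter down `w`.
-/

namespace TwoGraphGen

def isE {I J : Type} : TwoGraphGen I J → Bool
  | e _ => true
  | f _ => false

end TwoGraphGen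

namespace FTheta

variable {I J : Type} (θ : Equiv.Perm (I × J))

def gen : TwoGraphGen I J → FTheta θ
  | .e i => E θ i
  | .f j => F θ j

lemma gen_eq_mk' (g : TwoGraphGen I J) :
    gen θ g = (conGen (twoGraphRel θ)).mk' (FreeMonoid.of g) := by
  cases g <;> rfl

lemma E_mul_F (i : I) (j : J) :
    E θ i * F θ j = F θ (θ (i, j)).2 * E θ (θ (i, j)).1 := by
  exact (Con.eq _).2 (ConGen.Rel.of _ _ ⟨i, j, rfl, rfl⟩)

lemma F_mul_E (i : I) (j : J) :
    F θ j * E θ i = E θ (θ.symm (i, j)).1 * F θ (θ.symm (i, j)).2 := by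
  simpa using (E_mul_F θ (θ.symm (i, j)).1 (θ.symm (i, j)).2).symm

lemma exists_gen_mul_gen_eq_swap {g h : TwoGraphGen I J} (hgh : g.isE ≠ h.isE) :
    ∃ g' h' : TwoGraphGen I J, g'.isE = g.isE ∧ h'.isE = h.isE ∧
      gen θ g * gen θ h = gen θ h' * gen θ g' := by
  cases g with
  | e i => cases h with
    | e _ => exact absurd rfl hgh
    | f j => exact ⟨.e (θ (i, j)).1, .f (θ (i, j)).2, rfl, rfl, E_mul_F θ i j⟩
  | f j => cases h with
    | e i => exact ⟨.f (θ.symm (i, j)).2, .e (θ.symm (i, j)).1, rfl, rfl, F_mul_E θ i j⟩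
    | f _ => exact absurd rfl hgh

@[elab_as_elim]
lemma gen_mul_induction {p : FTheta θ → Prop} (one : p 1)
    (gen_mul : ∀ g w, p w → p (gen θ g * w)) (w : FTheta θ) : p w := by
  obtain ⟨L, rfl⟩ := Con.mk'_surjective w
  induction L using FreeMonoid.inductionOn' with
  | one => exact one
  | of_mul g L ih => rw [map_mul, ← gen_eq_mk']; exact gen_mul g _ ih

end FTheta

section MapsRay

variable {M H S : Type*} [Monoid M] [NormedAddCommGroup H] [NormedSpace ℂ H]
  {σ : M →* (H →L[ℂ] H)} {ξ : S → H}

def MapsRay (σ : M →* (H →L[ℂ] H)) (ξ : S → H) (w : M) (t s : S) : Prop :=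
  ∃ α : ℂ, α ≠ 0 ∧ σ w (ξ t) = α • ξ s

namespace MapsRay

variable {v w : M} {r s t : S}

lemma one : MapsRay σ ξ 1 t t := ⟨1, one_ne_zero, by simp⟩

lemma mul (hw : MapsRay σ ξ w t s) (hv : MapsRay σ ξ v s r) : MapsRay σ ξ (v * w) t r := by
  obtain ⟨α, hα, hw⟩ := hw
  obtain ⟨β, hβ, hv⟩ := hv
  refine ⟨α * β, mul_ne_zero hα hβ, ?_⟩
  rw [map_mul, mul_apply_eq_comp, hw, map_smul, hv, smul_smul]

lemma eq_of_one (hξ : LinearIndependent ℂ ξ) (h : MapsRay σ ξ 1 t s) : t = s := by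
  obtain ⟨α, -, h⟩ := h
  rw [map_one, one_apply_eq_self] at h
  by_contra hts
  apply hξ.notMem_span_image (s := {s}) hts
  rw [Set.image_singleton]
  exact Submodule.mem_span_singleton.2 ⟨α, h.symm⟩

lemma exists_of_mul (hξ : LinearIndependent ℂ ξ)
    (hw : (∃ (s : S) (μ : ℂ), ‖μ‖ = 1 ∧ σ w (ξ t) = μ • ξ s) ∨ σ w (ξ t) = 0)
    (h : MapsRay σ ξ (v * w) t r) : ∃ s, MapsRay σ ξ w t s ∧ MapsRay σ ξ v s r := by
  obtain ⟨α, hα, h⟩ := h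
  rw [map_mul, mul_apply_eq_comp] at h
  rcases hw with ⟨s, μ, hμ, hws⟩ | hw0
  · have hμ0 : μ ≠ 0 := by rintro rfl; simp at hμ
    rw [hws, map_smul] at h
    refine ⟨s, ⟨μ, hμ0, hws⟩, μ⁻¹ * α, mul_ne_zero (inv_ne_zero hμ0) hα, ?_⟩
    rw [mul_smul, ← h, inv_smul_smul₀ hμ0]
  · rw [hw0, map_zero] at h
    exact absurd h.symm (smul_ne_zero hα (hξ.ne_zero r))

end MapsRay

end MapsRay

section DefectFree

open FTheta

variable {I J : Type} {θ : Equiv.Perm (I × J)} {H S : Type*} [NormedAddCommGroup H]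
  [NormedSpace ℂ H] {ξ : S → H} {σ : FTheta θ →* (H →L[ℂ] H)}
  (hdfE : ∀ s : S, ∃! p : I × S, MapsRay σ ξ (E θ p.1) p.2 s)
  (hdfF : ∀ s : S, ∃! q : J × S, MapsRay σ ξ (F θ q.1) q.2 s)
include hdfE hdfF

lemma MapsRay.source_eq_of_isE_eq {g g' : TwoGraphGen I J} {a a' s : S}
    (hcol : g.isE = g'.isE) (h : MapsRay σ ξ (gen θ g) a s)
    (h' : MapsRay σ ξ (gen θ g') a' s) : a = a' := by
  cases g <;> cases g' <;> cases hcol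
  · exact congrArg Prod.snd ((hdfE s).unique (y₁ := (_, a)) (y₂ := (_, a')) h h')
  · exact congrArg Prod.snd ((hdfF s).unique (y₁ := (_, a)) (y₂ := (_, a')) h h')

lemma exists_mapsRay_gen_of_isE (s : S) (b : Bool) :
    ∃ (g : TwoGraphGen I J) (t : S), g.isE = b ∧ MapsRay σ ξ (gen θ g) t s := by
  cases b
  · obtain ⟨⟨j, t⟩, h, -⟩ := hdfF s
    exact ⟨.f j, t, rfl, h⟩
  · obtain ⟨⟨i, t⟩, h, -⟩ := hdfE s
    exact ⟨.e i, t, rfl, h⟩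

variable (hξ : LinearIndependent ℂ ξ)
  (hatomic : ∀ (w : FTheta θ) (s : S),
    (∃ (t : S) (α : ℂ), ‖α‖ = 1 ∧ σ w (ξ s) = α • ξ t) ∨ σ w (ξ s) = 0)
include hξ hatomic

lemma exists_common_source_of_isE_ne {g h : TwoGraphGen I J} {a b c : S}
    (hgh : g.isE ≠ h.isE) (hg : MapsRay σ ξ (gen θ g) a b)
    (hh : MapsRay σ ξ (gen θ h) c b) :
    ∃ (d : S) (x y : TwoGraphGen I J),
      MapsRay σ ξ (gen θ x) d a ∧ MapsRay σ ξ (gen θ y) d c := by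
  obtain ⟨g₀, d, hg₀, hd⟩ := exists_mapsRay_gen_of_isE hdfE hdfF c g.isE
  obtain ⟨h₁, g₁, -, hg₁, hswap⟩ :=
    exists_gen_mul_gen_eq_swap θ (hg₀.symm ▸ hgh.symm : h.isE ≠ g₀.isE)
  have hdb : MapsRay σ ξ (gen θ g₁ * gen θ h₁) d b := hswap ▸ hd.mul hh
  obtain ⟨r, hdr, hrb⟩ := hdb.exists_of_mul hξ (hatomic _ d)
  have hra : r = a := hrb.source_eq_of_isE_eq hdfE hdfF (hg₁.trans hg₀) hg
  exact ⟨d, h₁, g₀, hra ▸ hdr, hd⟩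

lemma exists_common_source_of_mapsRay_gen (w : FTheta θ) :
    ∀ {t b c : S} (h : TwoGraphGen I J),
      MapsRay σ ξ w t b → MapsRay σ ξ (gen θ h) c b →
      ∃ (d : S) (u v : FTheta θ), MapsRay σ ξ u d t ∧ MapsRay σ ξ v d c := by
  induction w using gen_mul_induction with
  | one =>
    intro t b c h htb hcb
    exact ⟨c, gen θ h, 1, MapsRay.eq_of_one hξ htb ▸ hcb, .one⟩
  | gen_mul g w ih =>
    intro t b c h htb hcb
    obtain ⟨r, htr, hrb⟩ := htb.exists_of_mul hξ (hatomic w t)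
    by_cases hgh : g.isE = h.isE
    · obtain rfl := hrb.source_eq_of_isE_eq hdfE hdfF hgh hcb
      exact ⟨t, 1, w, .one, htr⟩
    · obtain ⟨d, x, y, hdr, hdc⟩ :=
        exists_common_source_of_isE_ne hdfE hdfF hξ hatomic hgh hrb hcb
      obtain ⟨d', u, v, hu, hv⟩ := ih x htr hdr
      exact ⟨d', u, gen θ y * v, hu, hv.mul hdc⟩

end DefectFree

theorem common_pullback_of_connected_general {m n : ℕ} (θ : Equiv.Perm (Fin m × Fin n))
    {H : Type*} [NormedAddCommGroup H] [InnerProductSpace ℂ H]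
    {S : Type*} (ξ : S → H) (hon : Orthonormal ℂ ξ)
    (σ : FTheta θ →* (H →L[ℂ] H))
    (hatomic : ∀ (w : FTheta θ) (s : S),
      (∃ (t : S) (α : ℂ), ‖α‖ = 1 ∧ σ w (ξ s) = α • ξ t) ∨ σ w (ξ s) = 0)
    -- defect free: each basis ray is in the range of exactly one σ(e_i) and one σ(f_j)
    (hdfE : ∀ s : S, ∃! p : Fin m × S,
      ∃ α : ℂ, α ≠ 0 ∧ σ (FTheta.E θ p.1) (ξ p.2) = α • ξ s)
    (hdfF : ∀ s : S, ∃! q : Fin n × S,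
      ∃ α : ℂ, α ≠ 0 ∧ σ (FTheta.F θ q.1) (ξ q.2) = α • ξ s)
    -- connectedness of the (undirected) graph of σ
    (hconn : ∀ s t : S, Relation.ReflTransGen
      (fun a b =>
        (∃ i : Fin m, ∃ α : ℂ, α ≠ 0 ∧ σ (FTheta.E θ i) (ξ a) = α • ξ b) ∨
        (∃ j : Fin n, ∃ α : ℂ, α ≠ 0 ∧ σ (FTheta.F θ j) (ξ a) = α • ξ b) ∨
        (∃ i : Fin m, ∃ α : ℂ, α ≠ 0 ∧ σ (FTheta.E θ i) (ξ b) = α • ξ a) ∨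
        (∃ j : Fin n, ∃ α : ℂ, α ≠ 0 ∧ σ (FTheta.F θ j) (ξ b) = α • ξ a)) s t) :
    ∀ s₁ s₂ : S, ∃ (t : S) (w₁ w₂ : FTheta θ) (α₁ α₂ : ℂ),
      α₁ ≠ 0 ∧ α₂ ≠ 0 ∧ σ w₁ (ξ t) = α₁ • ξ s₁ ∧ σ w₂ (ξ t) = α₂ • ξ s₂ := by
  intro s₁ s₂
  have pullback :=
    exists_common_source_of_mapsRay_gen hdfE hdfF hon.linearIndependent hatomic
  obtain ⟨t, w₁, w₂, ⟨α₁, hα₁, h₁⟩, ⟨α₂, hα₂, h₂⟩⟩ :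
      ∃ (t : S) (w₁ w₂ : FTheta θ), MapsRay σ ξ w₁ t s₁ ∧ MapsRay σ ξ w₂ t s₂ := by
    induction hconn s₁ s₂ with
    | refl => exact ⟨s₁, 1, 1, .one, .one⟩
    | tail _ hedge ih =>
      obtain ⟨t, w₁, w₂, h₁, h₂⟩ := ih
      rcases hedge with ⟨i, he⟩ | ⟨j, he⟩ | ⟨i, he⟩ | ⟨j, he⟩
      · exact ⟨t, w₁, _, h₁, h₂.mul he⟩
      · exact ⟨t, w₁, _, h₁, h₂.mul he⟩
      · obtain ⟨d, u, v, hu, hv⟩ := pullback w₂ (.e i) h₂ he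
        exact ⟨d, w₁ * u, v, hu.mul h₁, hv⟩
      · obtain ⟨d, u, v, hu, hv⟩ := pullback w₂ (.f j) h₂ he
        exact ⟨d, w₁ * u, v, hu.mul h₁, hv⟩
  exact ⟨t, w₁, w₂, α₁, α₂, hα₁, hα₂, h₁, h₂⟩

/-- In a defect free atomic representation σ of F_θ⁺ with connected
graph, any two basis rays ℂξ₁, ℂξ₂ have a common pull-back: there are a basis ray ℂη
and words w₁, w₂ ∈ F_θ⁺ with σ(wᵢ)·ℂη = ℂξᵢ. -/
theorem common_pullback_of_connected {m n : ℕ} (θ : Equiv.Perm (Fin m × Fin n))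
    {H : Type*} [NormedAddCommGroup H] [InnerProductSpace ℂ H] [CompleteSpace H]
    {S : Type*} (ξ : S → H) (hon : Orthonormal ℂ ξ)
    (σ : FTheta θ →* (H →L[ℂ] H))
    (hatomic : ∀ (w : FTheta θ) (s : S),
      (∃ (t : S) (α : ℂ), ‖α‖ = 1 ∧ σ w (ξ s) = α • ξ t) ∨ σ w (ξ s) = 0)
    -- defect free: each basis ray is in the range of exactly one σ(e_i) and one σ(f_j)
    (hdfE : ∀ s : S, ∃! p : Fin m × S,
      ∃ α : ℂ, α ≠ 0 ∧ σ (FTheta.E θ p.1) (ξ p.2) = α • ξ s)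
    (hdfF : ∀ s : S, ∃! q : Fin n × S,
      ∃ α : ℂ, α ≠ 0 ∧ σ (FTheta.F θ q.1) (ξ q.2) = α • ξ s)
    -- connectedness of the (undirected) graph of σ
    (hconn : ∀ s t : S, Relation.ReflTransGen
      (fun a b =>
        (∃ i : Fin m, ∃ α : ℂ, α ≠ 0 ∧ σ (FTheta.E θ i) (ξ a) = α • ξ b) ∨
        (∃ j : Fin n, ∃ α : ℂ, α ≠ 0 ∧ σ (FTheta.F θ j) (ξ a) = α • ξ b) ∨
        (∃ i : Fin m, ∃ α : ℂ, α ≠ 0 ∧ σ (FTheta.E θ i) (ξ b) = α • ξ a) ∨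
        (∃ j : Fin n, ∃ α : ℂ, α ≠ 0 ∧ σ (FTheta.F θ j) (ξ b) = α • ξ a)) s t) :
    ∀ s₁ s₂ : S, ∃ (t : S) (w₁ w₂ : FTheta θ) (α₁ α₂ : ℂ),
      α₁ ≠ 0 ∧ α₂ ≠ 0 ∧ σ w₁ (ξ t) = α₁ • ξ s₁ ∧ σ w₂ (ξ t) = α₂ • ξ s₂ :=
  common_pullback_of_connected_general θ ξ hon σ hatomic hdfE hdfF hconn
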